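/- Let p ∈ (0,1), ε > 0, 0 < δ < 1−p, β > 0 and μ ≥ 1 + ε/2. If G_{p,ε}(β,μ) = 1−p−δ/2, then tanh(β(μ−1)/2) < 1 − δ/(1−p) and consequently β < (2/ε)·ln(2(1−p)/δ). -/

import Mathlib

/-!
The site with potential `ε` contributes more than `-p` to `2G - 1`, so the density equation
forces `(1 - p) tanh(β(μ - 1)/2) < 1 - p - δ`. Combined with `tanh x > 1 - 2 exp(-2x)` this gives
`exp(β(μ - 1)) < 2(1 - p)/δ`, and `μ - 1 ≥ ε/2` turns it into the bound on `β`.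
-/

noncomputable def G (p ε β μ : ℝ) : ℝ :=
  1 / 2 + (1 / 2) * (p * Real.tanh (β * (μ - ε - 1) / 2) +
    (1 - p) * Real.tanh (β * (μ - 1) / 2))

open Real

lemma Real.one_sub_two_mul_exp_lt_tanh (x : ℝ) : 1 - 2 * exp (-(2 * x)) < tanh x := by
  have hprod : exp x * exp (-x) = 1 := by rw [← exp_add, add_neg_cancel, exp_zero]
  have hsq : exp (-(2 * x)) = exp (-x) ^ 2 := by rw [← exp_nat_mul]; ring_nf
  have hpos := exp_pos (-x)
  rw [tanh_eq, hsq, lt_div_iff₀ (by positivity)]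
  nlinarith [pow_pos hpos 3]

lemma Real.two_mul_lt_log_of_tanh_lt {x a : ℝ} (ha : 0 < a) (h : tanh x < 1 - a) :
    2 * x < log (2 / a) := by
  have hexp : exp (2 * x) < 2 / a := by
    have hinv : exp (-(2 * x)) * exp (2 * x) = 1 := by rw [← exp_add, neg_add_cancel, exp_zero]
    rw [lt_div_iff₀' ha]
    nlinarith [one_sub_two_mul_exp_lt_tanh x, exp_pos (2 * x)]
  simpa using log_lt_log (exp_pos _) hexp

lemma lt_G {p : ℝ} (ε β μ : ℝ) (hp : 0 < p) :
    1 / 2 - p / 2 + (1 - p) / 2 * tanh (β * (μ - 1) / 2) < G p ε β μ := by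
  have := mul_lt_mul_of_pos_left (neg_one_lt_tanh (β * (μ - ε - 1) / 2)) hp
  unfold G
  linarith

theorem stmt_7_general (p ε δ β μ : ℝ) (hp : 0 < p) (hp1 : p < 1) (hε : 0 < ε)
    (hδ0 : 0 < δ) (hβ : 0 < β) (hμ : 1 + ε / 2 ≤ μ)
    (hG : G p ε β μ = 1 - p - δ / 2) :
    Real.tanh (β * (μ - 1) / 2) < 1 - δ / (1 - p) ∧
    β < (2 / ε) * Real.log (2 * (1 - p) / δ) := by
  have hq : 0 < 1 - p := by linarith
  have htanh : tanh (β * (μ - 1) / 2) < 1 - δ / (1 - p) := by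
    rw [lt_sub_comm, div_lt_iff₀ hq]
    linarith [lt_G ε β μ hp]
  refine ⟨htanh, ?_⟩
  have hlog := two_mul_lt_log_of_tanh_lt (div_pos hδ0 hq) htanh
  rw [div_div_eq_mul_div] at hlog
  calc β = 2 / ε * (β * ε / 2) := by field_simp
    _ < 2 / ε * log (2 * (1 - p) / δ) := by gcongr; nlinarith

theorem stmt_7 (p ε δ β μ : ℝ) (hp : 0 < p) (hp1 : p < 1) (hε : 0 < ε)
    (hδ0 : 0 < δ) (hδ : δ < 1 - p) (hβ : 0 < β) (hμ : 1 + ε / 2 ≤ μ)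
    (hG : G p ε β μ = 1 - p - δ / 2) :
    Real.tanh (β * (μ - 1) / 2) < 1 - δ / (1 - p) ∧
    β < (2 / ε) * Real.log (2 * (1 - p) / δ) :=
  stmt_7_general p ε δ β μ hp hp1 hε hδ0 hβ hμ hG
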